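/- For every A ∈ M₂(ℂ), 𝓜(A) = Z^{−1} Σ_{n,σ,n',σ'} e^{iτ(E_{nσ} − E_{n'σ'})} ( a_{nσ} a_{n'σ'} ⟨n|A|n'⟩ + b_{nσ} b_{n'σ'} ⟨1−n|A|1−n'⟩ ) · ( a_{nσ} a_{n'σ'} |n⟩⟨n'| + e^{−βE_E} b_{nσ} b_{n'σ'} |1−n⟩⟨1−n'| ), where the sum runs over n, n' ∈ {0,1} and σ, σ' ∈ {+,−}, and Z = 1 + e^{−βE_E}. -/

import Mathlib

/-!
`h_λ` conserves the number of excitations, so it is diagonalised by the orthonormal vectors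
`ψ_{nσ} = a_{nσ} |n, 0⟩ + b_{nσ} |1 - n, 1⟩` with eigenvalues `E_{nσ}`: for `n = 0` these are
`|0, 0⟩` and `|1, 1⟩`, for `n = 1` the eigenvectors of the block `[[E_S, λ], [λ, E_E]]` on
`span {|1, 0⟩, |0, 1⟩}` (which needs `λ ≠ 0` to normalise). Expanding both exponentials in this
basis gives `e^{iτh}(A ⊗ 1)e^{-iτh} = ∑ e^{iτ(E_q - E_q')} ⟨ψ_q|A ⊗ 1|ψ_q'⟩ |ψ_q⟩⟨ψ_q'|`, where
`⟨ψ_q|A ⊗ 1|ψ_q'⟩ = a a' A_{nn'} + b b' A_{1-n,1-n'}`. Since `g_β` is diagonal, the partial trace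
of `|ψ_q⟩⟨ψ_q'|` keeps only the `|0⟩⟨0|` and `|1⟩⟨1|` components of the second factor, with
weights `1/Z` and `e^{-βE_E}/Z`.
-/

open Matrix
open scoped Kronecker Matrix BigOperators

noncomputable section

/-- The Hamiltonian of the two-level system `S`. -/
def hamS (ES : ℝ) : Matrix (Fin 2) (Fin 2) ℂ := !![0, 0; 0, (ES : ℂ)]

/-- The Hamiltonian of the two-level system `E`. -/
def hamE (EE : ℝ) : Matrix (Fin 2) (Fin 2) ℂ := !![0, 0; 0, (EE : ℂ)]

/-- The annihilation operator `a` with `a|1⟩ = |0⟩`, `a|0⟩ = 0`. -/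
def annOp : Matrix (Fin 2) (Fin 2) ℂ := !![0, 1; 0, 0]

/-- The coupled Hamiltonian `h_λ = h_S ⊗ 1 + 1 ⊗ h_E + λ (a ⊗ a* + a* ⊗ a)`. -/
def hamLam (ES EE lam : ℝ) : Matrix (Fin 2 × Fin 2) (Fin 2 × Fin 2) ℂ :=
  hamS ES ⊗ₖ 1 + 1 ⊗ₖ hamE EE + (lam : ℂ) • (annOp ⊗ₖ annOpᴴ + annOpᴴ ⊗ₖ annOp)

/-- `ν₀ = √((E_S − E_E)² + 4λ²)`. -/
def nu0 (ES EE lam : ℝ) : ℝ := Real.sqrt ((ES - EE) ^ 2 + 4 * lam ^ 2)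

/-- The eigenvalues `E_{nσ}` of `h_λ` (`σ = true` is `+`, `σ = false` is `−`). -/
def eLevel (ES EE lam : ℝ) (n : Fin 2) (σ : Bool) : ℝ :=
  if n = 0 then (if σ then 0 else ES + EE)
  else ((ES + EE) + (if σ then nu0 ES EE lam else -(nu0 ES EE lam))) / 2

/-- The coefficients `a_{nσ}`. -/
def aCoef (ES EE lam : ℝ) (n : Fin 2) (σ : Bool) : ℝ :=
  if n = 0 then (if σ then 1 else 0)
  else -lam / Real.sqrt (lam ^ 2 + (ES - eLevel ES EE lam 1 σ) ^ 2)

/-- The coefficients `b_{nσ}`. -/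
def bCoef (ES EE lam : ℝ) (n : Fin 2) (σ : Bool) : ℝ :=
  if n = 0 then (if σ then 0 else 1)
  else (ES - eLevel ES EE lam 1 σ) / Real.sqrt (lam ^ 2 + (ES - eLevel ES EE lam 1 σ) ^ 2)

/-- `1 − n` on `{0, 1}`. -/
def flipIdx (n : Fin 2) : Fin 2 := if n = 0 then 1 else 0

namespace Matrix

variable {m ι α : Type*}

theorem mul_mul_conjTranspose_eq_sum_vecMulVec [Fintype ι] [CommSemiring α] [StarRing α]
    (U : Matrix m ι α) (M : Matrix ι ι α) :
    U * M * Uᴴ = ∑ q, ∑ q', M q q' • vecMulVec (Uᵀ q) (star (Uᵀ q')) := by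
  ext p p'
  simp only [mul_apply, sum_apply, smul_apply, vecMulVec_apply, Finset.sum_mul, smul_eq_mul,
    conjTranspose_apply, transpose_apply, Pi.star_apply]
  rw [Finset.sum_comm]
  exact Finset.sum_congr rfl fun q _ => Finset.sum_congr rfl fun q' _ => by ring

theorem conjTranspose_mul_mul_apply [Fintype m] [CommSemiring α] [StarRing α]
    (U : Matrix m ι α) (X : Matrix m m α) (q q' : ι) :
    (Uᴴ * X * U) q q' = star (Uᵀ q) ⬝ᵥ X *ᵥ Uᵀ q' := by
  simp only [mul_apply, dotProduct, mulVec, Finset.sum_mul, Finset.mul_sum, mul_assoc,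
    conjTranspose_apply, transpose_apply, Pi.star_apply]
  exact Finset.sum_comm

variable [Fintype m] [DecidableEq m] [Fintype ι] [DecidableEq ι]

theorem eq_mul_diagonal_mul_conjTranspose_of_mulVec_eq [CommSemiring α] [StarRing α]
    {U : Matrix m ι α} (hU' : U * Uᴴ = 1) {H : Matrix m m α} {d : ι → α}
    (h : ∀ q, H *ᵥ Uᵀ q = d q • Uᵀ q) : H = U * diagonal d * Uᴴ := by
  have hHU : H * U = U * diagonal d := by
    ext p q
    rw [mul_apply, mul_diagonal, mul_comm]
    exact congrFun (h q) p
  rw [← hHU, Matrix.mul_assoc, hU', Matrix.mul_one]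

theorem exp_mul_diagonal_mul_conjTranspose {U : Matrix m ι ℂ} (hU : Uᴴ * U = 1)
    (hU' : U * Uᴴ = 1) (d : ι → ℂ) :
    NormedSpace.exp (U * diagonal d * Uᴴ) = U * diagonal (fun q => Complex.exp (d q)) * Uᴴ := by
  let conj : Matrix ι ι ℂ →+* Matrix m m ℂ :=
    { toFun := fun M => U * M * Uᴴ
      map_one' := by simpa using hU'
      map_mul' := fun M N => by
        simp only [Matrix.mul_assoc, ← Matrix.mul_assoc Uᴴ U, hU, Matrix.one_mul]
      map_zero' := by simp
      map_add' := fun M N => by simp [Matrix.mul_add, Matrix.add_mul] }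
  have hconj : Continuous conj :=
    (continuous_const.matrix_mul continuous_id).matrix_mul continuous_const
  -- `map_exp` needs a normed algebra; the operator norm makes matrices one.
  have hexp : NormedSpace.exp (U * diagonal d * Uᴴ) = conj (NormedSpace.exp (diagonal d)) :=
    (open scoped Norms.Operator in NormedSpace.map_exp conj hconj (diagonal d)).symm
  rw [hexp, exp_diagonal, Pi.exp_def, ← Complex.exp_eq_exp_ℂ]
  rfl

theorem exp_smul_mul_mul_exp_neg_smul {U : Matrix m ι ℂ} (hU : Uᴴ * U = 1) (hU' : U * Uᴴ = 1)
    {H : Matrix m m ℂ} {d : ι → ℂ} (hH : H = U * diagonal d * Uᴴ) (c : ℂ) (X : Matrix m m ℂ) :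
    NormedSpace.exp (c • H) * X * NormedSpace.exp (-c • H)
      = ∑ q, ∑ q', (Complex.exp (c * (d q - d q')) * (star (Uᵀ q) ⬝ᵥ X *ᵥ Uᵀ q'))
          • vecMulVec (Uᵀ q) (star (Uᵀ q')) := by
  have hsmul (c : ℂ) : c • H = U * diagonal (c • d) * Uᴴ := by
    rw [hH, diagonal_smul, Matrix.mul_smul, Matrix.smul_mul]
  rw [hsmul, hsmul, exp_mul_diagonal_mul_conjTranspose hU hU',
    exp_mul_diagonal_mul_conjTranspose hU hU']
  have hregroup : U * diagonal (fun q => Complex.exp ((c • d) q)) * Uᴴ * X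
        * (U * diagonal (fun q => Complex.exp ((-c • d) q)) * Uᴴ)
      = U * (diagonal (fun q => Complex.exp ((c • d) q)) * (Uᴴ * X * U)
          * diagonal (fun q => Complex.exp ((-c • d) q))) * Uᴴ := by
    simp only [Matrix.mul_assoc]
  rw [hregroup, mul_mul_conjTranspose_eq_sum_vecMulVec]
  refine Finset.sum_congr rfl fun q _ => Finset.sum_congr rfl fun q' _ => ?_
  rw [mul_diagonal, diagonal_mul, conjTranspose_mul_mul_apply, mul_sub, Complex.exp_sub]
  simp only [Pi.smul_apply, smul_eq_mul, neg_mul, Complex.exp_neg]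
  congr 1
  ring

end Matrix

theorem partialTrace_single {n p : Type*} [DecidableEq n] [Fintype p] [DecidableEq p]
    {g : Matrix p p ℂ} {TrE : Matrix (n × p) (n × p) ℂ →ₗ[ℂ] Matrix n n ℂ}
    (hTrE : ∀ (X : Matrix n n ℂ) (Y : Matrix p p ℂ), TrE (X ⊗ₖ Y) = trace (g * Y) • X)
    (i k : n) (j l : p) :
    TrE (single (i, j) (k, l) 1) = g l j • single i k 1 := by
  rw [← mul_one (1 : ℂ), ← single_kronecker_single, hTrE, trace_mul_single]
  simp

lemma exp_smul_hamE (EE : ℝ) (c : ℂ) :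
    NormedSpace.exp (c • hamE EE) = diagonal ![1, Complex.exp (c * EE)] := by
  have hdiag : c • hamE EE = diagonal ![0, c * EE] := by
    ext i j
    fin_cases i <;> fin_cases j <;> simp [hamE]
  rw [hdiag, exp_diagonal, Pi.exp_def, ← Complex.exp_eq_exp_ℂ]
  congr 1
  ext i
  fin_cases i <;> simp

lemma gibbs_hamE_eq (β EE : ℝ) :
    (trace (NormedSpace.exp ((-β : ℂ) • hamE EE)))⁻¹ • NormedSpace.exp ((-β : ℂ) • hamE EE)
      = ((1 + Real.exp (-β * EE) : ℝ) : ℂ)⁻¹ • diagonal ![1, (Real.exp (-β * EE) : ℂ)] := by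
  rw [exp_smul_hamE]
  push_cast
  simp [trace_diagonal, Fin.sum_univ_two]

lemma flipIdx_injective : Function.Injective flipIdx := by
  unfold flipIdx
  decide

lemma nu0_sq (ES EE lam : ℝ) : nu0 ES EE lam ^ 2 = (ES - EE) ^ 2 + 4 * lam ^ 2 :=
  Real.sq_sqrt (by positivity)

lemma sub_eLevel_mul_sub_eLevel (ES EE lam : ℝ) (σ : Bool) :
    (ES - eLevel ES EE lam 1 σ) * (EE - eLevel ES EE lam 1 σ) = lam ^ 2 := by
  cases σ <;> simp [eLevel] <;> linear_combination nu0_sq ES EE lam / 4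

lemma sub_eLevel_true_mul_sub_eLevel_false (ES EE lam : ℝ) :
    (ES - eLevel ES EE lam 1 true) * (ES - eLevel ES EE lam 1 false) = -lam ^ 2 := by
  simp [eLevel]
  linear_combination -nu0_sq ES EE lam / 4

lemma aCoef_mul_add_bCoef_mul (ES EE : ℝ) {lam : ℝ} (hlam : lam ≠ 0) (n : Fin 2) (σ σ' : Bool) :
    aCoef ES EE lam n σ * aCoef ES EE lam n σ' + bCoef ES EE lam n σ * bCoef ES EE lam n σ'
      = if σ = σ' then 1 else 0 := by
  fin_cases n
  · cases σ <;> cases σ' <;> simp [aCoef, bCoef]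
  · have hsq (σ : Bool) :=
      Real.sq_sqrt (by positivity : 0 ≤ lam ^ 2 + (ES - eLevel ES EE lam 1 σ) ^ 2)
    simp only [aCoef, bCoef, Fin.mk_one, one_ne_zero, if_false]
    cases σ <;> cases σ' <;> simp only [Bool.false_eq_true, if_true, if_false, reduceCtorEq] <;>
      field_simp
    · exact (hsq false).symm
    · linear_combination sub_eLevel_true_mul_sub_eLevel_false ES EE lam
    · linear_combination sub_eLevel_true_mul_sub_eLevel_false ES EE lam
    · exact (hsq true).symm

lemma eLevel_mul_aCoef_one (ES EE : ℝ) {lam : ℝ} (hlam : lam ≠ 0) (σ : Bool) :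
    eLevel ES EE lam 1 σ * aCoef ES EE lam 1 σ
      = lam * bCoef ES EE lam 1 σ + ES * aCoef ES EE lam 1 σ := by
  simp only [aCoef, bCoef, one_ne_zero, if_false]
  field_simp
  ring

lemma eLevel_mul_bCoef_one (ES EE : ℝ) {lam : ℝ} (hlam : lam ≠ 0) (σ : Bool) :
    eLevel ES EE lam 1 σ * bCoef ES EE lam 1 σ
      = EE * bCoef ES EE lam 1 σ + lam * aCoef ES EE lam 1 σ := by
  simp only [aCoef, bCoef, one_ne_zero, if_false]
  field_simp
  linear_combination -sub_eLevel_mul_sub_eLevel ES EE lam σ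

def spinEigvec (ES EE lam : ℝ) (q : Fin 2 × Bool) : Fin 2 × Fin 2 → ℂ :=
  (aCoef ES EE lam q.1 q.2 : ℂ) • Pi.single (q.1, 0) 1
    + (bCoef ES EE lam q.1 q.2 : ℂ) • Pi.single (flipIdx q.1, 1) 1

def spinEigbasis (ES EE lam : ℝ) : Matrix (Fin 2 × Fin 2) (Fin 2 × Bool) ℂ :=
  (Matrix.of (spinEigvec ES EE lam))ᵀ

lemma spinEigbasis_transpose_apply (ES EE lam : ℝ) (q : Fin 2 × Bool) :
    (spinEigbasis ES EE lam)ᵀ q = spinEigvec ES EE lam q :=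
  rfl

lemma star_spinEigvec (ES EE lam : ℝ) (q : Fin 2 × Bool) :
    star (spinEigvec ES EE lam q) = spinEigvec ES EE lam q := by
  simp [spinEigvec, Pi.star_single]

lemma spinEigvec_dotProduct (ES EE lam : ℝ) (q : Fin 2 × Bool) (v : Fin 2 × Fin 2 → ℂ) :
    spinEigvec ES EE lam q ⬝ᵥ v
      = aCoef ES EE lam q.1 q.2 * v (q.1, 0) + bCoef ES EE lam q.1 q.2 * v (flipIdx q.1, 1) := by
  simp [spinEigvec, add_dotProduct, smul_dotProduct, single_dotProduct]

lemma spinEigvec_apply_zero (ES EE lam : ℝ) (q : Fin 2 × Bool) (n : Fin 2) :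
    spinEigvec ES EE lam q (n, 0) = if q.1 = n then (aCoef ES EE lam q.1 q.2 : ℂ) else 0 := by
  simp [spinEigvec, Pi.single_apply, eq_comm]

lemma spinEigvec_apply_one (ES EE lam : ℝ) (q : Fin 2 × Bool) (n : Fin 2) :
    spinEigvec ES EE lam q (n, 1)
      = if flipIdx q.1 = n then (bCoef ES EE lam q.1 q.2 : ℂ) else 0 := by
  simp [spinEigvec, Pi.single_apply, eq_comm]

lemma star_spinEigvec_dotProduct (ES EE : ℝ) {lam : ℝ} (hlam : lam ≠ 0) (q q' : Fin 2 × Bool) :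
    star (spinEigvec ES EE lam q) ⬝ᵥ spinEigvec ES EE lam q' = if q = q' then 1 else 0 := by
  obtain ⟨n, σ⟩ := q
  obtain ⟨n', σ'⟩ := q'
  rw [star_spinEigvec, spinEigvec_dotProduct, spinEigvec_apply_zero, spinEigvec_apply_one]
  simp only [flipIdx_injective.eq_iff]
  by_cases hn : n' = n
  · subst hn
    have h := aCoef_mul_add_bCoef_mul ES EE hlam n' σ σ'
    simp only [if_true, Prod.mk.injEq, true_and]
    split_ifs at h ⊢ <;> exact_mod_cast h
  · simp [hn, Ne.symm hn]

lemma spinEigbasis_conjTranspose_mul_self (ES EE : ℝ) {lam : ℝ} (hlam : lam ≠ 0) :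
    (spinEigbasis ES EE lam)ᴴ * spinEigbasis ES EE lam = 1 := by
  ext q q'
  have h := conjTranspose_mul_mul_apply (spinEigbasis ES EE lam) 1 q q'
  rw [Matrix.mul_one, one_mulVec] at h
  rw [h, one_apply, spinEigbasis_transpose_apply, spinEigbasis_transpose_apply,
    star_spinEigvec_dotProduct ES EE hlam]

lemma spinEigbasis_mul_conjTranspose (ES EE : ℝ) {lam : ℝ} (hlam : lam ≠ 0) :
    spinEigbasis ES EE lam * (spinEigbasis ES EE lam)ᴴ = 1 :=
  (mul_eq_one_comm_of_card_eq _ _ _ (by simp)).mp (spinEigbasis_conjTranspose_mul_self ES EE hlam)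

lemma hamLam_mulVec_spinEigvec (ES EE : ℝ) {lam : ℝ} (hlam : lam ≠ 0) (q : Fin 2 × Bool) :
    hamLam ES EE lam *ᵥ spinEigvec ES EE lam q
      = (eLevel ES EE lam q.1 q.2 : ℂ) • spinEigvec ES EE lam q := by
  obtain ⟨n, σ⟩ := q
  have ha : (lam * bCoef ES EE lam 1 σ + ES * aCoef ES EE lam 1 σ : ℂ)
      = eLevel ES EE lam 1 σ * aCoef ES EE lam 1 σ := by
    exact_mod_cast (eLevel_mul_aCoef_one ES EE hlam σ).symm
  have hb : (EE * bCoef ES EE lam 1 σ + lam * aCoef ES EE lam 1 σ : ℂ)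
      = eLevel ES EE lam 1 σ * bCoef ES EE lam 1 σ := by
    exact_mod_cast (eLevel_mul_bCoef_one ES EE hlam σ).symm
  ext ⟨i, j⟩
  fin_cases n
  · fin_cases i <;> fin_cases j <;> cases σ <;>
      simp [hamLam, hamS, hamE, annOp, spinEigvec, mulVec, dotProduct, Pi.single_apply,
        flipIdx, eLevel, aCoef, bCoef]
  · fin_cases i <;> fin_cases j <;>
      simp [hamLam, hamS, hamE, annOp, spinEigvec, mulVec, dotProduct, Fintype.sum_prod_type,
        Pi.single_apply, flipIdx, ha, hb]

lemma hamLam_eq_spinEigbasis (ES EE : ℝ) {lam : ℝ} (hlam : lam ≠ 0) :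
    hamLam ES EE lam = spinEigbasis ES EE lam
      * diagonal (fun q : Fin 2 × Bool => (eLevel ES EE lam q.1 q.2 : ℂ))
      * (spinEigbasis ES EE lam)ᴴ :=
  eq_mul_diagonal_mul_conjTranspose_of_mulVec_eq (spinEigbasis_mul_conjTranspose ES EE hlam)
    (hamLam_mulVec_spinEigvec ES EE hlam)

lemma star_spinEigvec_dotProduct_kronecker_one_mulVec (ES EE lam : ℝ)
    (A : Matrix (Fin 2) (Fin 2) ℂ) (q q' : Fin 2 × Bool) :
    star (spinEigvec ES EE lam q) ⬝ᵥ (A ⊗ₖ 1) *ᵥ spinEigvec ES EE lam q'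
      = ((aCoef ES EE lam q.1 q.2 * aCoef ES EE lam q'.1 q'.2 : ℝ) : ℂ) * A q.1 q'.1
        + ((bCoef ES EE lam q.1 q.2 * bCoef ES EE lam q'.1 q'.2 : ℝ) : ℂ)
          * A (flipIdx q.1) (flipIdx q'.1) := by
  rw [star_spinEigvec, spinEigvec_dotProduct]
  simp [spinEigvec, mulVec_add, mulVec_smul, mulVec_single]
  ring

lemma vecMulVec_spinEigvec (ES EE lam : ℝ) (q q' : Fin 2 × Bool) :
    vecMulVec (spinEigvec ES EE lam q) (star (spinEigvec ES EE lam q'))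
      = ((aCoef ES EE lam q.1 q.2 * aCoef ES EE lam q'.1 q'.2 : ℝ) : ℂ)
          • single (q.1, 0) (q'.1, 0) 1
        + ((aCoef ES EE lam q.1 q.2 * bCoef ES EE lam q'.1 q'.2 : ℝ) : ℂ)
          • single (q.1, 0) (flipIdx q'.1, 1) 1
        + ((bCoef ES EE lam q.1 q.2 * aCoef ES EE lam q'.1 q'.2 : ℝ) : ℂ)
          • single (flipIdx q.1, 1) (q'.1, 0) 1
        + ((bCoef ES EE lam q.1 q.2 * bCoef ES EE lam q'.1 q'.2 : ℝ) : ℂ)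
          • single (flipIdx q.1, 1) (flipIdx q'.1, 1) 1 := by
  rw [star_spinEigvec]
  simp only [spinEigvec, add_vecMulVec, vecMulVec_add, smul_vecMulVec, vecMulVec_smul,
    ← single_eq_single_vecMulVec_single, Complex.ofReal_mul]
  module

lemma partialTrace_vecMulVec_spinEigvec (ES EE lam : ℝ) {g : Matrix (Fin 2) (Fin 2) ℂ}
    (hg : g.IsDiag)
    {TrE : Matrix (Fin 2 × Fin 2) (Fin 2 × Fin 2) ℂ →ₗ[ℂ] Matrix (Fin 2) (Fin 2) ℂ}
    (hTrE : ∀ X Y : Matrix (Fin 2) (Fin 2) ℂ, TrE (X ⊗ₖ Y) = trace (g * Y) • X)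
    (q q' : Fin 2 × Bool) :
    TrE (vecMulVec (spinEigvec ES EE lam q) (star (spinEigvec ES EE lam q')))
      = (g 0 0 * ((aCoef ES EE lam q.1 q.2 * aCoef ES EE lam q'.1 q'.2 : ℝ) : ℂ))
          • single q.1 q'.1 1
        + (g 1 1 * ((bCoef ES EE lam q.1 q.2 * bCoef ES EE lam q'.1 q'.2 : ℝ) : ℂ))
          • single (flipIdx q.1) (flipIdx q'.1) 1 := by
  simp only [vecMulVec_spinEigvec, map_add, map_smul, partialTrace_single hTrE,
    hg (by decide : (0 : Fin 2) ≠ 1), hg (by decide : (1 : Fin 2) ≠ 0), zero_smul, smul_zero,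
    add_zero, smul_smul]
  ring_nf

theorem spin_spin_reduced_dynamics_formula_general
    (ES EE lam β τ : ℝ) (hlam : lam ≠ 0)
    (gβ : Matrix (Fin 2) (Fin 2) ℂ)
    (hgβ : gβ = (Matrix.trace (NormedSpace.exp ((-β : ℂ) • hamE EE)))⁻¹
      • NormedSpace.exp ((-β : ℂ) • hamE EE))
    -- `Tr_E` is the `g_β`-weighted partial trace over the second factor
    (TrE : Matrix (Fin 2 × Fin 2) (Fin 2 × Fin 2) ℂ →ₗ[ℂ] Matrix (Fin 2) (Fin 2) ℂ)
    (hTrE : ∀ X Y : Matrix (Fin 2) (Fin 2) ℂ, TrE (X ⊗ₖ Y) = Matrix.trace (gβ * Y) • X)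
    (MM : Matrix (Fin 2) (Fin 2) ℂ → Matrix (Fin 2) (Fin 2) ℂ)
    (hMM : ∀ A, MM A = TrE (NormedSpace.exp ((Complex.I * (τ : ℂ)) • hamLam ES EE lam)
      * (A ⊗ₖ 1) * NormedSpace.exp ((-(Complex.I * (τ : ℂ))) • hamLam ES EE lam))) :
    ∀ A : Matrix (Fin 2) (Fin 2) ℂ,
      MM A = ((1 + Real.exp (-β * EE) : ℝ) : ℂ)⁻¹ •
        ∑ n : Fin 2, ∑ σ : Bool, ∑ n' : Fin 2, ∑ σ' : Bool,
          Complex.exp (Complex.I * (τ : ℂ)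
              * ((eLevel ES EE lam n σ - eLevel ES EE lam n' σ' : ℝ) : ℂ)) •
            (((aCoef ES EE lam n σ * aCoef ES EE lam n' σ' : ℝ) : ℂ) * A n n'
              + ((bCoef ES EE lam n σ * bCoef ES EE lam n' σ' : ℝ) : ℂ)
                  * A (flipIdx n) (flipIdx n')) •
            (((aCoef ES EE lam n σ * aCoef ES EE lam n' σ' : ℝ) : ℂ)
                  • Matrix.single n n' (1 : ℂ)
              + ((Real.exp (-β * EE) * bCoef ES EE lam n σ * bCoef ES EE lam n' σ' : ℝ) : ℂ)
                  • Matrix.single (flipIdx n) (flipIdx n') (1 : ℂ)) := by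
  intro A
  have hg := hgβ.trans (gibbs_hamE_eq β EE)
  have hdiag : gβ.IsDiag := hg ▸ (isDiag_diagonal _).smul _
  have hg00 : gβ 0 0 = ((1 + Real.exp (-β * EE) : ℝ) : ℂ)⁻¹ := by simp [hg]
  have hg11 : gβ 1 1 = ((1 + Real.exp (-β * EE) : ℝ) : ℂ)⁻¹ * Real.exp (-β * EE) := by simp [hg]
  rw [hMM, exp_smul_mul_mul_exp_neg_smul (spinEigbasis_conjTranspose_mul_self ES EE hlam)
    (spinEigbasis_mul_conjTranspose ES EE hlam) (hamLam_eq_spinEigbasis ES EE hlam)]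
  simp only [map_sum, map_smul, spinEigbasis_transpose_apply,
    star_spinEigvec_dotProduct_kronecker_one_mulVec, partialTrace_vecMulVec_spinEigvec ES EE lam hdiag hTrE,
    Fintype.sum_prod_type, Finset.smul_sum]
  refine Finset.sum_congr rfl fun n _ => Finset.sum_congr rfl fun σ _ =>
    Finset.sum_congr rfl fun n' _ => Finset.sum_congr rfl fun σ' _ => ?_
  rw [hg00, hg11]
  push_cast
  module

/-- Explicit formula for the reduced dynamics map
`𝓜(A) = Tr_E(e^{iτh_λ}(A ⊗ 1)e^{−iτh_λ})` of the spin-spin model. -/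
theorem spin_spin_reduced_dynamics_formula
    (ES EE lam β τ : ℝ) (hES : 0 < ES) (hEE : 0 < EE) (hlam : lam ≠ 0)
    (hβ : 0 < β) (hτ : 0 < τ)
    (gβ : Matrix (Fin 2) (Fin 2) ℂ)
    (hgβ : gβ = (Matrix.trace (NormedSpace.exp ((-β : ℂ) • hamE EE)))⁻¹
      • NormedSpace.exp ((-β : ℂ) • hamE EE))
    -- `Tr_E` is the `g_β`-weighted partial trace over the second factor
    (TrE : Matrix (Fin 2 × Fin 2) (Fin 2 × Fin 2) ℂ →ₗ[ℂ] Matrix (Fin 2) (Fin 2) ℂ)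
    (hTrE : ∀ X Y : Matrix (Fin 2) (Fin 2) ℂ, TrE (X ⊗ₖ Y) = Matrix.trace (gβ * Y) • X)
    (MM : Matrix (Fin 2) (Fin 2) ℂ → Matrix (Fin 2) (Fin 2) ℂ)
    (hMM : ∀ A, MM A = TrE (NormedSpace.exp ((Complex.I * (τ : ℂ)) • hamLam ES EE lam)
      * (A ⊗ₖ 1) * NormedSpace.exp ((-(Complex.I * (τ : ℂ))) • hamLam ES EE lam))) :
    ∀ A : Matrix (Fin 2) (Fin 2) ℂ,
      MM A = ((1 + Real.exp (-β * EE) : ℝ) : ℂ)⁻¹ •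
        ∑ n : Fin 2, ∑ σ : Bool, ∑ n' : Fin 2, ∑ σ' : Bool,
          Complex.exp (Complex.I * (τ : ℂ)
              * ((eLevel ES EE lam n σ - eLevel ES EE lam n' σ' : ℝ) : ℂ)) •
            (((aCoef ES EE lam n σ * aCoef ES EE lam n' σ' : ℝ) : ℂ) * A n n'
              + ((bCoef ES EE lam n σ * bCoef ES EE lam n' σ' : ℝ) : ℂ)
                  * A (flipIdx n) (flipIdx n')) •
            (((aCoef ES EE lam n σ * aCoef ES EE lam n' σ' : ℝ) : ℂ)
                  • Matrix.single n n' (1 : ℂ)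
              + ((Real.exp (-β * EE) * bCoef ES EE lam n σ * bCoef ES EE lam n' σ' : ℝ) : ℂ)
                  • Matrix.single (flipIdx n) (flipIdx n') (1 : ℂ)) :=
  spin_spin_reduced_dynamics_formula_general ES EE lam β τ hlam gβ hgβ TrE hTrE MM hMM

end
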